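/- arXiv:2102.01471 — 2 statements merged into one kernel-verified Lean document; each statement's English description precedes it below -/
import Mathlib

section
/- Let (F, σ) be a difference field whose constant field K = const(F, σ) has characteristic 0, let f ∈ F, and let F[s] be the polynomial ring in one variable s with σ extended to a ring automorphism of F[s] by σ(s) = s + f. Then const(F[s], σ) = K if and only if there is no g ∈ F with σ(g) − g = f. -/
/-!
If `σ g - g = f` then `s - g` is a new constant. Conversely, the extended automorphism
`p ↦ (σ p)(s + f)` commutes with `d/ds`, so differentiating a constant `p` of degree `n > 0`
exactly `n - 1` times yields (characteristic 0) a constant `b s + d` with `b ≠ 0`; comparing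
coefficients gives `σ b = b` and `b f + σ d = d`, so `g = -d / b` solves `σ g - g = f`.
-/

open Polynomial

namespace Polynomial

theorem natDegree_iterate_derivative_eq {R : Type*} [Semiring R] [IsAddTorsionFree R]
    (p : R[X]) (k : ℕ) : (derivative^[k] p).natDegree = p.natDegree - k := by
  induction k with
  | zero => rfl
  | succ k ih => rw [Function.iterate_succ_apply', natDegree_derivative, ih, Nat.sub_sub]

section CommSemiring

variable {R : Type*} [CommSemiring R]

/-- The S-extension of `σ` with `σ(s) = s + f`, where `s = X`. -/
noncomputable def sExtend (σ : R →+* R) (f : R) : R[X] →+* R[X] :=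
  (compRingHom (X + C f)).comp (mapRingHom σ)

variable (σ : R →+* R) (f : R)

theorem sExtend_apply (p : R[X]) : sExtend σ f p = (p.map σ).comp (X + C f) := rfl

@[simp]
theorem sExtend_C (a : R) : sExtend σ f (C a) = C (σ a) := by
  simp [sExtend_apply]

@[simp]
theorem sExtend_X : sExtend σ f X = X + C f := by
  simp [sExtend_apply]

theorem eq_sExtend {φ : R[X] →+* R[X]} (hC : ∀ a, φ (C a) = C (σ a))
    (hX : φ X = X + C f) : φ = sExtend σ f :=
  ringHom_ext (by simpa using hC) (by simpa using hX)

theorem derivative_sExtend (p : R[X]) :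
    derivative (sExtend σ f p) = sExtend σ f (derivative p) := by
  simp [sExtend_apply, derivative_comp, derivative_map]

theorem iterate_derivative_sExtend (k : ℕ) (p : R[X]) :
    derivative^[k] (sExtend σ f p) = sExtend σ f (derivative^[k] p) :=
  Function.Commute.iterate_left (fun q => derivative_sExtend σ f q) k p

theorem sExtend_iterate_derivative_eq_self {p : R[X]} (hp : sExtend σ f p = p) (k : ℕ) :
    sExtend σ f (derivative^[k] p) = derivative^[k] p := by
  rw [← iterate_derivative_sExtend, hp]

end CommSemiring

theorem sExtend_X_sub_C {R : Type*} [CommRing R] {σ : R →+* R} {f g : R} (hg : σ g - g = f) :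
    sExtend σ f (X - C g) = X - C g := by
  rw [map_sub, sExtend_X, sExtend_C, ← hg, C_sub]
  ring

section Field

variable {F : Type*} [Field F] {σ : F →+* F} {f : F}

theorem exists_sub_eq_of_sExtend_eq_self_of_natDegree_eq_one {q : F[X]}
    (hq : sExtend σ f q = q) (hdeg : q.natDegree = 1) : ∃ g, σ g - g = f := by
  set b := q.coeff 1
  set d := q.coeff 0
  have hb : b ≠ 0 := by
    have := leadingCoeff_ne_zero.mpr (ne_zero_of_natDegree_gt hdeg.symm.le)
    rwa [leadingCoeff, hdeg] at this
  have hlin : C (σ b) * (X + C f) + C (σ d) = C b * X + C d := by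
    rw [eq_X_add_C_of_natDegree_le_one hdeg.le] at hq
    simpa using hq
  have hσb : σ b = b := by simpa using congrArg (coeff · 1) hlin
  have hσd : b * f + σ d = d := by simpa [hσb] using congrArg (coeff · 0) hlin
  refine ⟨-d / b, ?_⟩
  rw [map_div₀, map_neg, hσb]
  field_simp
  linear_combination -hσd

theorem exists_sub_eq_of_sExtend_eq_self [CharZero F] {p : F[X]}
    (hp : sExtend σ f p = p) (hdeg : 0 < p.natDegree) : ∃ g, σ g - g = f :=
  exists_sub_eq_of_sExtend_eq_self_of_natDegree_eq_one
    (sExtend_iterate_derivative_eq_self σ f hp (p.natDegree - 1))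
    (by rw [natDegree_iterate_derivative_eq]; omega)

end Field

end Polynomial

theorem sigma_extension_criterion
    (F : Type*) [Field F] [CharZero F] (σ : F ≃+* F) (f : F)
    (σ' : Polynomial F ≃+* Polynomial F)
    (hC : ∀ a : F, σ' (Polynomial.C a) = Polynomial.C (σ a))
    (hX : σ' Polynomial.X = Polynomial.X + Polynomial.C f) :
    ({p : Polynomial F | σ' p = p}
        = Polynomial.C '' {c : F | σ c = c})
      ↔ ¬∃ g : F, σ g - g = f := by
  have hσ' : ∀ p, σ' p = sExtend (σ : F →+* F) f p := fun p =>
    DFunLike.congr_fun (eq_sExtend (σ : F →+* F) f (φ := σ') hC hX) p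
  constructor
  · rintro h ⟨g, hg⟩
    have hfixed : X - C g ∈ {p : F[X] | σ' p = p} := by
      simpa [hσ'] using sExtend_X_sub_C (σ := (σ : F →+* F)) hg
    obtain ⟨c, -, hc⟩ := h ▸ hfixed
    simpa using congrArg natDegree hc
  · intro hng
    ext p
    constructor
    · intro hp
      have hdeg : p.natDegree = 0 := by
        by_contra hne
        exact hng <| exists_sub_eq_of_sExtend_eq_self ((hσ' p).symm.trans hp)
          (Nat.pos_of_ne_zero hne)
      rw [eq_C_of_natDegree_eq_zero hdeg] at hp ⊢
      exact ⟨p.coeff 0, C_injective (by simpa [hC] using hp), rfl⟩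
    · rintro ⟨c, hc, rfl⟩
      exact (hC c).trans (congrArg C hc)
end

section
/- Let (F, σ) be a difference field with constant field K = const(F,σ), let f ∈ F*, and let F[t, t^{-1}] be the Laurent polynomial ring with σ extended to a ring automorphism by σ(t) = f·t. Then const(F[t,t^{-1}], σ) = K if and only if there exist no g ∈ F \ {0} and m ∈ ℤ \ {0} with σ(g) = f^m · g. -/
/-!
Since `τ (T n) = C (f ^ n) * T n`, the map `τ` acts on coefficients: the coefficient of `T m` in
`τ p` is `σ a * f ^ m`, where `a` is that of `p`. So `p` is fixed iff `σ a * f ^ m = a` for each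
coefficient, and for `a ≠ 0` this is `σ a⁻¹ = f ^ m * a⁻¹`. A fixed `p` with a nonzero coefficient
at some `m ≠ 0` thus yields `g = a⁻¹`, and conversely `σ g = f ^ m * g` makes `C g⁻¹ * T m` fixed.
-/

open LaurentPolynomial

namespace LaurentPolynomial

theorem eq_C_coeff_zero {R : Type*} [Semiring R] {p : R[T;T⁻¹]}
    (hp : ∀ m ≠ 0, p.coeff m = 0) : p = C (p.coeff 0) := by
  ext m
  rcases eq_or_ne m 0 with rfl | hm
  · simp
  · simp [hm, hp m hm]

theorem coeff_C_mul_T {R : Type*} [Semiring R] (a : R) (n m : ℤ) :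
    (C a * T n).coeff m = if n = m then a else 0 := by
  rw [← single_eq_C_mul_T, AddMonoidAlgebra.coeff_single, Finsupp.single_apply]

variable {F Sτ : Type*} [Field F] [FunLike Sτ F[T;T⁻¹] F[T;T⁻¹]]
  [RingHomClass Sτ F[T;T⁻¹] F[T;T⁻¹]] {τ : Sτ} {f : F}

theorem map_T_of_map_T_one (hf : f ≠ 0) (hT : τ (T 1) = C f * T 1) (n : ℤ) :
    τ (T n) = C (f ^ n) * T n := by
  have hnat : ∀ k : ℕ, τ (T k) = C (f ^ (k : ℤ)) * T k := by
    intro k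
    induction k with
    | zero => simp [T_zero]
    | succ k ih =>
      rw [Nat.cast_succ, T_add, map_mul, ih, hT, zpow_add_one₀ hf, map_mul]
      ring
  obtain ⟨k, rfl | rfl⟩ := Int.eq_nat_or_neg n
  · exact hnat k
  · -- `τ (T (-k))` and `C (f ^ (-k)) * T (-k)` are a left and a right inverse of `τ (T k)`
    refine left_inv_eq_right_inv (a := τ (T k)) ?_ ?_
    · rw [← map_mul, ← T_add, neg_add_cancel, T_zero, map_one]
    · rw [hnat, mul_mul_mul_comm, ← map_mul, ← T_add, ← zpow_add₀ hf, add_neg_cancel,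
        zpow_zero, T_zero, map_one, mul_one]

theorem map_C_mul_T {σ : F → F} (hC : ∀ a, τ (C a) = C (σ a)) (hf : f ≠ 0)
    (hT : τ (T 1) = C f * T 1) (a : F) (n : ℤ) : τ (C a * T n) = C (σ a * f ^ n) * T n := by
  rw [map_mul, hC, map_T_of_map_T_one hf hT, ← mul_assoc, ← map_mul]

theorem coeff_map {Sσ : Type*} [FunLike Sσ F F] [RingHomClass Sσ F F] {σ : Sσ}
    (hC : ∀ a, τ (C a) = C (σ a)) (hf : f ≠ 0) (hT : τ (T 1) = C f * T 1)
    (p : F[T;T⁻¹]) (m : ℤ) : (τ p).coeff m = σ (p.coeff m) * f ^ m := by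
  induction p using LaurentPolynomial.induction_on' with
  | add p q hp hq =>
    simp only [map_add, AddMonoidAlgebra.coeff_add, Finsupp.add_apply, hp, hq, add_mul]
  | C_mul_T n a =>
    rw [map_C_mul_T hC hf hT, coeff_C_mul_T, coeff_C_mul_T]
    split_ifs with hnm
    · rw [hnm]
    · simp

theorem map_eq_self_iff {Sσ : Type*} [FunLike Sσ F F] [RingHomClass Sσ F F] {σ : Sσ}
    (hC : ∀ a, τ (C a) = C (σ a)) (hf : f ≠ 0) (hT : τ (T 1) = C f * T 1) {p : F[T;T⁻¹]} :
    τ p = p ↔ ∀ m, σ (p.coeff m) * f ^ m = p.coeff m := by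
  simp only [LaurentPolynomial.ext_iff, coeff_map hC hf hT]

end LaurentPolynomial

theorem map_eq_zpow_mul_iff_map_inv_mul_zpow {F S : Type*} [Field F] [FunLike S F F]
    [RingHomClass S F F] {σ : S} {f g : F} (hg : g ≠ 0) (m : ℤ) :
    σ g = f ^ m * g ↔ σ g⁻¹ * f ^ m = g⁻¹ := by
  rw [map_inv₀, inv_mul_eq_iff_eq_mul₀ ((map_ne_zero σ).mpr hg), eq_mul_inv_iff_mul_eq₀ hg,
    eq_comm]

theorem pi_extension_criterion
    (F : Type*) [Field F] (σ : F ≃+* F) (f : F) (hf : f ≠ 0)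
    (τ : LaurentPolynomial F ≃+* LaurentPolynomial F)
    (hC : ∀ a : F, τ (LaurentPolynomial.C a) = LaurentPolynomial.C (σ a))
    (hT : τ (LaurentPolynomial.T 1) = LaurentPolynomial.C f * LaurentPolynomial.T 1) :
    ({p : LaurentPolynomial F | τ p = p}
        = LaurentPolynomial.C '' {c : F | σ c = c})
      ↔ ¬∃ g : F, g ≠ 0 ∧ ∃ m : ℤ, m ≠ 0 ∧ σ g = f ^ m * g := by
  constructor
  · rintro hconst ⟨g, hg, m, hm, hσ⟩
    have hfixed : τ (C g⁻¹ * T m) = C g⁻¹ * T m := by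
      rw [map_C_mul_T hC hf hT, (map_eq_zpow_mul_iff_map_inv_mul_zpow hg m).mp hσ]
    obtain ⟨c, -, hc⟩ := hconst.subset hfixed
    simpa [coeff_C_mul_T, hm, hg.symm] using congr_arg (·.coeff m) hc
  · intro h
    ext p
    refine ⟨fun hp => ?_, ?_⟩
    · have hcoeff := (map_eq_self_iff hC hf hT).mp hp
      have hzero (m : ℤ) (hm : m ≠ 0) : p.coeff m = 0 := by
        by_contra ha
        refine h ⟨_, inv_ne_zero ha, m, hm, ?_⟩
        rw [map_eq_zpow_mul_iff_map_inv_mul_zpow (inv_ne_zero ha), inv_inv, hcoeff]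
      exact ⟨p.coeff 0, by simpa using hcoeff 0, (eq_C_coeff_zero hzero).symm⟩
    · rintro ⟨c, hc, rfl⟩
      exact (hC c).trans (congr_arg C hc)
end
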